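/- Let Q := G Gᵀ be symmetric positive definite where G is a real m×n matrix, define L := I_n − Gᵀ Q⁻¹ G, let Ω̂ be a symmetric positive semidefinite real p×p matrix, F a real p×n matrix, Ā a real p×p matrix, B a real m×p matrix, and set M := L Fᵀ Ω̂ F L + I_n and Ψ := L M⁻¹ L. Then the matrix Ω := Āᵀ (I_p − Ω̂ F Ψ Fᵀ) Ω̂ Ā + Bᵀ Q⁻¹ B is symmetric and positive semidefinite. -/

import Mathlib

/-!
Write `Ω̂ = SᴴS`. With `C := S F L` and `L` symmetric, `M = CᴴC + 1`, so the first summand is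
`(S Ā)ᴴ (1 - C (CᴴC + 1)⁻¹ Cᴴ) (S Ā)`, and by the Woodbury identity the middle factor is
`(CCᴴ + 1)⁻¹`, which is positive definite. The second summand is a congruence of `Q⁻¹`,
and `Q = G Gᵀ` is a Gram matrix.
-/

open Matrix
open scoped ComplexOrder

namespace Matrix

variable {𝕜 m n : Type*} [RCLike 𝕜] [Fintype m] [Fintype n] [DecidableEq m] [DecidableEq n]

theorem one_sub_mul_inv_conjTranspose_mul_self_add_one_mul_conjTranspose (C : Matrix m n 𝕜) :
    1 - C * (Cᴴ * C + 1)⁻¹ * Cᴴ = (C * Cᴴ + 1)⁻¹ := by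
  have hunit : IsUnit (Cᴴ * C + 1) :=
    (PosDef.posSemidef_add (posSemidef_conjTranspose_mul_self C) PosDef.one).isUnit
  have hwoodbury := add_mul_mul_inv_eq_sub 1 C 1 Cᴴ isUnit_one isUnit_one
    (by simpa only [inv_one, Matrix.mul_one, add_comm] using hunit)
  simpa only [inv_one, Matrix.mul_one, Matrix.one_mul, add_comm] using hwoodbury.symm

open scoped MatrixOrder in
theorem PosSemidef.one_sub_mul_inv_add_one_mul_conjTranspose_mul {Ω : Matrix m m 𝕜}
    (hΩ : Ω.PosSemidef) (K : Matrix m n 𝕜) :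
    ((1 - Ω * K * (Kᴴ * Ω * K + 1)⁻¹ * Kᴴ) * Ω).PosSemidef := by
  obtain ⟨S, rfl⟩ := CStarAlgebra.nonneg_iff_eq_star_mul_self.mp hΩ.nonneg
  rw [star_eq_conjTranspose]
  have hN : (S * K * (S * K)ᴴ + 1).PosDef :=
    PosDef.posSemidef_add (posSemidef_self_mul_conjTranspose _) PosDef.one
  have hfactor : (1 - Sᴴ * S * K * (Kᴴ * (Sᴴ * S) * K + 1)⁻¹ * Kᴴ) * (Sᴴ * S) =
      Sᴴ * (1 - S * K * ((S * K)ᴴ * (S * K) + 1)⁻¹ * (S * K)ᴴ) * S := by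
    simp only [conjTranspose_mul, mul_sub, sub_mul, one_mul, mul_one, Matrix.mul_assoc]
  rw [hfactor, one_sub_mul_inv_conjTranspose_mul_self_add_one_mul_conjTranspose]
  exact hN.inv.posSemidef.conjTranspose_mul_mul_same S

end Matrix

theorem rbps_mixed_backward_info_posSemidef
    (m n p : ℕ) (G : Matrix (Fin m) (Fin n) ℝ)
    (Ωhat : Matrix (Fin p) (Fin p) ℝ) (hΩ : Ωhat.PosSemidef)
    (F : Matrix (Fin p) (Fin n) ℝ) (Abar : Matrix (Fin p) (Fin p) ℝ)
    (B : Matrix (Fin m) (Fin p) ℝ) :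
    let Q : Matrix (Fin m) (Fin m) ℝ := G * Gᵀ
    let L : Matrix (Fin n) (Fin n) ℝ := 1 - Gᵀ * Q⁻¹ * G
    let M : Matrix (Fin n) (Fin n) ℝ := L * Fᵀ * Ωhat * F * L + 1
    let Ψ : Matrix (Fin n) (Fin n) ℝ := L * M⁻¹ * L
    (Abarᵀ * (1 - Ωhat * F * Ψ * Fᵀ) * Ωhat * Abar + Bᵀ * Q⁻¹ * B).PosSemidef := by
  intro Q L M Ψ
  have hQinv : Q⁻¹.PosSemidef := by
    simpa only [conjTranspose_eq_transpose_of_trivial] using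
      (posSemidef_self_mul_conjTranspose G).inv
  have hL : Lᵀ = L := by
    have hQinv_symm : Q⁻¹ᵀ = Q⁻¹ := isHermitian_iff_isSymm.mp hQinv.isHermitian
    simp only [L, Matrix.mul_assoc, transpose_sub, transpose_one, transpose_mul, hQinv_symm,
      transpose_transpose]
  have hΨ : Ωhat * F * Ψ * Fᵀ =
      Ωhat * (F * L) * ((F * L)ᴴ * Ωhat * (F * L) + 1)⁻¹ * (F * L)ᴴ := by
    simp only [Ψ, M, Matrix.mul_assoc, conjTranspose_eq_transpose_of_trivial, transpose_mul, hL]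
  have hcore := hΩ.one_sub_mul_inv_add_one_mul_conjTranspose_mul (F * L)
  rw [← hΨ] at hcore
  refine PosSemidef.add ?_ ?_
  · simpa only [Matrix.mul_assoc, conjTranspose_eq_transpose_of_trivial] using
      hcore.conjTranspose_mul_mul_same Abar
  · simpa only [conjTranspose_eq_transpose_of_trivial] using hQinv.conjTranspose_mul_mul_same B
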